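/- Let ξ* be a probability measure on a finite set S with invertible information matrix M(ξ*), f : S → ℝ^k. If for every probability measure ξ' on S the Gateaux derivative at 0 of α ↦ log det M((1-α)ξ* + αξ') is ≤ 0, then f(s)ᵀ M(ξ*)⁻¹ f(s) ≤ k for all s ∈ S. -/

import Mathlib

/-!
Moving from `ξ*` towards the point mass at `s` changes the information matrix along the line
`M(ξ*) + α (f(s) f(s)ᵀ - M(ξ*))`, and Jacobi's formula `(log det)'(A) [D] = tr (A⁻¹ D)` gives
the derivative `tr (M(ξ*)⁻¹ f(s) f(s)ᵀ) - tr 1 = f(s)ᵀ M(ξ*)⁻¹ f(s) - k` at `α = 0`.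
-/

open Matrix Polynomial

theorem Matrix.trace_mul_vecMulVec {n R : Type*} [Fintype n] [CommSemiring R]
    (A : Matrix n n R) (u v : n → R) :
    (A * vecMulVec u v).trace = v ⬝ᵥ (A *ᵥ u) := by
  rw [mul_vecMulVec, trace_vecMulVec, dotProduct_comm]

theorem Finset.sum_one_sub_mul_add_mul_smul {R ι E : Type*} [CommRing R] [Fintype ι]
    [AddCommGroup E] [Module R E] (ξ η : ι → R) (B : ι → E) (α : R) :
    ∑ s, ((1 - α) * ξ s + α * η s) • B s =
      ∑ s, ξ s • B s + α • (∑ s, η s • B s - ∑ s, ξ s • B s) := by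
  simp only [Finset.smul_sum, ← Finset.sum_sub_distrib, ← Finset.sum_add_distrib]
  exact Finset.sum_congr rfl fun s _ => by module

section JacobiFormula

variable {𝕜 : Type*} [NontriviallyNormedField 𝕜] {n : Type*} [Fintype n] [DecidableEq n]

theorem Matrix.hasDerivAt_det_one_add_smul (B : Matrix n n 𝕜) :
    HasDerivAt (fun α : 𝕜 => (1 + α • B).det) B.trace 0 := by
  have h := (det (1 + (X : 𝕜[X]) • B.map C)).hasDerivAt (0 : 𝕜)
  rw [derivative_det_one_add_X_smul] at h
  refine h.congr_of_eventuallyEq (Filter.Eventually.of_forall fun α => ?_)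
  simp [eval_det, ← smul_eq_mul_diagonal]

theorem Matrix.hasDerivAt_det_add_smul {A : Matrix n n 𝕜} (hA : IsUnit A.det)
    (D : Matrix n n 𝕜) :
    HasDerivAt (fun α : 𝕜 => (A + α • D).det) (A.det * (A⁻¹ * D).trace) 0 := by
  have hfactor (α : 𝕜) : (A + α • D).det = A.det * (1 + α • (A⁻¹ * D)).det := by
    rw [← det_mul, mul_add, mul_one, Matrix.mul_smul, mul_nonsing_inv_cancel_left A D hA]
  exact ((hasDerivAt_det_one_add_smul (A⁻¹ * D)).const_mul A.det).congr_of_eventuallyEq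
    (Filter.Eventually.of_forall hfactor)

end JacobiFormula

theorem Matrix.hasDerivAt_log_det_add_smul {n : Type*} [Fintype n] [DecidableEq n]
    {A : Matrix n n ℝ} (hA : IsUnit A.det) (D : Matrix n n ℝ) :
    HasDerivAt (fun α : ℝ => Real.log (A + α • D).det) (A⁻¹ * D).trace 0 := by
  have h := (hasDerivAt_det_add_smul hA D).log (by simpa using hA.ne_zero)
  rwa [zero_smul, add_zero, mul_div_cancel_left₀ _ hA.ne_zero] at h

theorem stmt_5_general {S : Type*} [Fintype S] (k : ℕ) (f : S → Fin k → ℝ)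
    (ξstar : S → ℝ)
    (M : (S → ℝ) → Matrix (Fin k) (Fin k) ℝ)
    (hM : ∀ ξ, M ξ = ∑ s, ξ s • Matrix.vecMulVec (f s) (f s))
    (hinv : IsUnit (M ξstar).det)
    (hderiv : ∀ ξ' : S → ℝ, (∀ s, 0 ≤ ξ' s) → ∑ s, ξ' s = 1 →
      deriv (fun α : ℝ =>
        Real.log (M (fun s => (1 - α) * ξstar s + α * ξ' s)).det) 0 ≤ 0) :
    ∀ s : S, f s ⬝ᵥ ((M ξstar)⁻¹ *ᵥ f s) ≤ (k : ℝ) := by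
  classical
  intro t
  set δ : S → ℝ := Pi.single t 1 with hδ
  have hpoint : M δ = vecMulVec (f t) (f t) := by
    simp [hM, hδ, Pi.single_apply]
  have hmix (α : ℝ) : M (fun s => (1 - α) * ξstar s + α * δ s) =
      M ξstar + α • (vecMulVec (f t) (f t) - M ξstar) := by
    rw [hM, Finset.sum_one_sub_mul_add_mul_smul, ← hM, ← hM, hpoint]
  have hle := hderiv δ (fun s => (Pi.single_nonneg.2 zero_le_one : 0 ≤ δ) s) (by simp [hδ])
  simp only [hmix, (hasDerivAt_log_det_add_smul hinv _).deriv, Matrix.mul_sub, trace_sub,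
    nonsing_inv_mul _ hinv, trace_one, trace_mul_vecMulVec, Fintype.card_fin] at hle
  linarith

/-- If all Gateaux derivatives of log det M at ξ* are ≤ 0, then d(s, ξ*) ≤ k for all s. -/
theorem stmt_5 {S : Type*} [Fintype S] (k : ℕ) (f : S → Fin k → ℝ)
    (ξstar : S → ℝ) (hs0 : ∀ s, 0 ≤ ξstar s) (hs1 : ∑ s, ξstar s = 1)
    (M : (S → ℝ) → Matrix (Fin k) (Fin k) ℝ)
    (hM : ∀ ξ, M ξ = ∑ s, ξ s • Matrix.vecMulVec (f s) (f s))
    (hinv : IsUnit (M ξstar).det)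
    (hderiv : ∀ ξ' : S → ℝ, (∀ s, 0 ≤ ξ' s) → ∑ s, ξ' s = 1 →
      deriv (fun α : ℝ =>
        Real.log (M (fun s => (1 - α) * ξstar s + α * ξ' s)).det) 0 ≤ 0) :
    ∀ s : S, f s ⬝ᵥ ((M ξstar)⁻¹ *ᵥ f s) ≤ (k : ℝ) :=
  stmt_5_general k f ξstar M hM hinv hderiv
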